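/- arXiv:1401.6611 — 3 statements merged into one kernel-verified Lean document; each statement's English description precedes it below -/
import Mathlib

section
/- Let p be a prime, χ a nonprincipal multiplicative character of F_p, G a multiplicative subgroup of F_p^*, and a ∈ F_p^*. Then |Σ_{λ ∈ G} χ(a + λ)| ≤ √p. -/
open scoped Classical

section Aux

variable {p : ℕ} [Fact p.Prime]

private lemma mulChar_norm_unit (ψ : MulChar (ZMod p) ℂ) {x : ZMod p} (hx : IsUnit x) :
    ‖ψ x‖ = 1 := by
  obtain ⟨u, rfl⟩ := hx
  refine Complex.norm_eq_one_of_pow_eq_one (n := Fintype.card (ZMod p)ˣ) ?_ Fintype.card_ne_zero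
  rw [← map_pow, ← Units.val_pow_eq_pow_val, pow_card_eq_one, Units.val_one, map_one]

private lemma mulChar_norm_le (ψ : MulChar (ZMod p) ℂ) (x : ZMod p) : ‖ψ x‖ ≤ 1 := by
  by_cases hx : IsUnit x
  · exact (mulChar_norm_unit ψ hx).le
  · rw [ψ.map_nonunit hx]; simp

private lemma mulChar_conj (ψ : MulChar (ZMod p) ℂ) (x : ZMod p) :
    (starRingEnd ℂ) (ψ x) = ψ⁻¹ x := by
  rw [MulChar.inv_apply_eq_inv']
  by_cases hx : IsUnit x
  · exact (Complex.inv_eq_conj (mulChar_norm_unit ψ hx)).symm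
  · rw [ψ.map_nonunit hx]; simp

private lemma conj_jacobiSum (ψ χ : MulChar (ZMod p) ℂ) :
    (starRingEnd ℂ) (jacobiSum ψ χ) = jacobiSum ψ⁻¹ χ⁻¹ := by
  simp only [jacobiSum, map_sum, map_mul, mulChar_conj]

private lemma one_le_sqrt_p : (1 : ℝ) ≤ Real.sqrt p := by
  have h2 : (2 : ℕ) ≤ p := (Fact.out : p.Prime).two_le
  rw [show (1 : ℝ) = Real.sqrt 1 by simp]
  exact Real.sqrt_le_sqrt (by exact_mod_cast Nat.one_le_of_lt h2)

private lemma norm_jacobiSum_le (ψ χ : MulChar (ZMod p) ℂ) (hχ : χ ≠ 1) :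
    ‖jacobiSum ψ χ‖ ≤ Real.sqrt p := by
  have h1p : (1 : ℝ) ≤ Real.sqrt p := one_le_sqrt_p
  by_cases hψ : ψ = 1
  · subst hψ
    rw [jacobiSum_one_nontrivial hχ]
    simpa using h1p
  by_cases hψχ : ψ * χ = 1
  · have hχ' : χ = ψ⁻¹ := eq_inv_of_mul_eq_one_left (by rwa [mul_comm] at hψχ)
    rw [hχ', jacobiSum_nontrivial_inv hψ, norm_neg]
    exact (mulChar_norm_le ψ (-1)).trans h1p
  · have hchar : ringChar ℂ ≠ ringChar (ZMod p) := by
      rw [ringChar.eq_zero, ZMod.ringChar_zmod_n]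
      exact fun h => (Fact.out : p.Prime).ne_zero h.symm
    have hkey := jacobiSum_mul_jacobiSum_inv hchar hψ hχ hψχ
    rw [← conj_jacobiSum, Complex.mul_conj'] at hkey
    have hcard : Fintype.card (ZMod p) = p := ZMod.card p
    have hnorm : ‖jacobiSum ψ χ‖ ^ 2 = (p : ℝ) := by
      rw [hcard] at hkey
      exact_mod_cast hkey
    rw [show (p : ℝ) = ‖jacobiSum ψ χ‖ ^ 2 from hnorm.symm, Real.sqrt_sq (norm_nonneg _)]

private lemma sum_units_eq_sum (g : ZMod p → ℂ) (hg : g 0 = 0) :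
    ∑ t : (ZMod p)ˣ, g ↑t = ∑ t : ZMod p, g t := by
  have h1 : ∑ t : (ZMod p)ˣ, g ↑t = ∑ t : {x : ZMod p // x ≠ 0}, g ↑t := by
    refine Fintype.sum_equiv unitsEquivNeZero _ _ fun u => ?_
    simp [unitsEquivNeZero]
  have h2 : ∑ t ∈ ({(0 : ZMod p)}ᶜ : Finset (ZMod p)), g t = ∑ t : {x : ZMod p // x ≠ 0}, g ↑t :=
    Finset.sum_subtype _ (by simp) g
  rw [h1, ← h2, ← Finset.sum_compl_add_sum ({(0 : ZMod p)} : Finset (ZMod p)) g]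
  simp [hg]

private lemma norm_inner_sum_le (χ ψ : MulChar (ZMod p) ℂ) (hχ : χ ≠ 1) (a : (ZMod p)ˣ) :
    ‖∑ x : (ZMod p)ˣ, ψ ↑x * χ (↑a + ↑x)‖ ≤ Real.sqrt p := by
  have hzero : ψ (0 : ZMod p) = 0 := ψ.map_nonunit (by simp)
  have step1 : ∑ x : (ZMod p)ˣ, ψ ↑x * χ (↑a + ↑x)
      = ψ ↑a * χ ↑a * ∑ t : (ZMod p)ˣ, ψ ↑t * χ (1 + ↑t) := by
    rw [Finset.mul_sum, ← Equiv.sum_comp (Equiv.mulLeft a) (fun x => ψ ↑x * χ (↑a + ↑x))]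
    refine Finset.sum_congr rfl fun t _ => ?_
    have h1 : ((Equiv.mulLeft a t : (ZMod p)ˣ) : ZMod p) = ↑a * ↑t := rfl
    rw [h1, show (↑a : ZMod p) + ↑a * ↑t = ↑a * (1 + ↑t) by ring, map_mul, map_mul]
    ring
  have step2 : ∑ t : (ZMod p)ˣ, ψ ↑t * χ (1 + ↑t) = ψ (-1) * jacobiSum ψ χ := by
    rw [sum_units_eq_sum (fun t => ψ t * χ (1 + t)) (by simp [hzero]), jacobiSum, Finset.mul_sum,
      ← Equiv.sum_comp (Equiv.neg (ZMod p)) (fun t => ψ t * χ (1 + t))]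
    refine Finset.sum_congr rfl fun x _ => ?_
    simp only [Equiv.neg_apply]
    rw [show (1 : ZMod p) + -x = 1 - x by ring,
      show ψ (-x) = ψ (-1) * ψ x by rw [← map_mul]; ring_nf]
    ring
  rw [step1, step2, norm_mul, norm_mul, norm_mul]
  calc ‖ψ ↑a‖ * ‖χ ↑a‖ * (‖ψ (-1)‖ * ‖jacobiSum ψ χ‖)
      ≤ 1 * 1 * (1 * Real.sqrt p) := by
        gcongr
        · exact mulChar_norm_le ψ _
        · exact mulChar_norm_le χ _
        · exact mulChar_norm_le ψ _
        · exact norm_jacobiSum_le ψ χ hχ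
    _ = Real.sqrt p := by ring

end Aux

/-- The classical bound: for a nonprincipal multiplicative character `χ` of `𝔽_p`, a
multiplicative subgroup `G ⊆ 𝔽_p^*` and `a ∈ 𝔽_p^*`, one has
`|∑_{λ ∈ G} χ(a + λ)| ≤ √p`. -/
theorem stmt_5 (p : ℕ) [Fact p.Prime] (χ : MulChar (ZMod p) ℂ) (hχ : χ ≠ 1)
    (G : Subgroup (ZMod p)ˣ) (a : (ZMod p)ˣ) :
    ‖∑ l : G, χ ((a : ZMod p) + ((l : (ZMod p)ˣ) : ZMod p))‖ ≤ Real.sqrt p := by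
  set Q := (ZMod p)ˣ ⧸ G with hQdef
  haveI : NeZero ((Monoid.exponent Q : ℂ)) :=
    ⟨Nat.cast_ne_zero.mpr (Monoid.exponent_ne_zero_of_finite (G := Q))⟩
  obtain ⟨e⟩ := CommGroup.monoidHom_mulEquiv_of_hasEnoughRootsOfUnity Q ℂ
  haveI : Fintype (Q →* ℂˣ) := Fintype.ofEquiv Q e.toEquiv.symm
  set n := Nat.card Q with hn
  have hn0 : 0 < n := Nat.card_pos
  have hcard : Fintype.card (Q →* ℂˣ) = n := by
    rw [← Nat.card_eq_fintype_card]
    exact Nat.card_congr e.toEquiv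
  have orth : ∀ q : Q, ∑ φ : Q →* ℂˣ, ((φ q : ℂˣ) : ℂ) = if q = 1 then (n : ℂ) else 0 := by
    intro q
    split_ifs with hq
    · subst hq
      simp only [map_one, Units.val_one, Finset.sum_const, Finset.card_univ, nsmul_eq_mul,
        mul_one, hcard]
    · obtain ⟨φ₀, hφ₀⟩ := CommGroup.exists_apply_ne_one_of_hasEnoughRootsOfUnity Q ℂ hq
      refine eq_zero_of_mul_eq_self_left (b := ((φ₀ q : ℂˣ) : ℂ)) ?_ ?_
      · simpa only [ne_eq, Units.val_eq_one] using hφ₀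
      · rw [Finset.mul_sum]
        calc ∑ φ : Q →* ℂˣ, ((φ₀ q : ℂˣ) : ℂ) * ((φ q : ℂˣ) : ℂ)
            = ∑ φ : Q →* ℂˣ, (((φ₀ * φ) q : ℂˣ) : ℂ) := by
              refine Finset.sum_congr rfl fun φ _ => ?_
              simp [MonoidHom.mul_apply]
          _ = ∑ φ : Q →* ℂˣ, ((φ q : ℂˣ) : ℂ) :=
              Fintype.sum_bijective _ (Group.mulLeft_bijective φ₀) _ _ fun φ => rfl
  set S : ℂ := ∑ l : G, χ ((a : ZMod p) + ((l : (ZMod p)ˣ) : ZMod p)) with hS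
  have key : (n : ℂ) * S = ∑ φ : Q →* ℂˣ, ∑ x : (ZMod p)ˣ, ((φ ↑x : ℂˣ) : ℂ) * χ (↑a + ↑x) := by
    rw [Finset.sum_comm]
    symm
    calc ∑ x : (ZMod p)ˣ, ∑ φ : Q →* ℂˣ, ((φ ↑x : ℂˣ) : ℂ) * χ (↑a + ↑x)
        = ∑ x : (ZMod p)ˣ, (if ((x : Q) = 1) then (n : ℂ) else 0) * χ (↑a + ↑x) := by
          refine Finset.sum_congr rfl fun x _ => ?_
          rw [← Finset.sum_mul, orth]
      _ = ∑ x : (ZMod p)ˣ, (if x ∈ G then (n : ℂ) * χ (↑a + ↑x) else 0) := by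
          refine Finset.sum_congr rfl fun x _ => ?_
          by_cases hxG : x ∈ G
          · rw [if_pos ((QuotientGroup.eq_one_iff x).mpr hxG), if_pos hxG]
          · have h1 : ¬((x : Q) = 1) := fun h => hxG ((QuotientGroup.eq_one_iff x).mp h)
            rw [if_neg h1, if_neg hxG, zero_mul]
      _ = ∑ x ∈ Finset.univ.filter (· ∈ G), (n : ℂ) * χ (↑a + ↑x) :=
          (Finset.sum_filter _ _).symm
      _ = ∑ l : G, (n : ℂ) * χ (↑a + ((l : (ZMod p)ˣ) : ZMod p)) :=
          Finset.sum_subtype _ (fun x => by simp only [Finset.mem_filter, Finset.mem_univ, true_and]) (fun x : (ZMod p)ˣ => (n : ℂ) * χ (↑a + (x : ZMod p)))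
      _ = (n : ℂ) * S := by rw [hS, Finset.mul_sum]
  have hT : ∀ φ : Q →* ℂˣ,
      ‖∑ x : (ZMod p)ˣ, ((φ ↑x : ℂˣ) : ℂ) * χ (↑a + ↑x)‖ ≤ Real.sqrt p := by
    intro φ
    have hx : ∀ x : (ZMod p)ˣ,
        ((MulChar.ofUnitHom (φ.comp (QuotientGroup.mk' G))) ↑x : ℂ) = ((φ ↑x : ℂˣ) : ℂ) := by
      intro x
      rw [MulChar.ofUnitHom_coe]
      rfl
    calc ‖∑ x : (ZMod p)ˣ, ((φ ↑x : ℂˣ) : ℂ) * χ (↑a + ↑x)‖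
        = ‖∑ x : (ZMod p)ˣ,
            (MulChar.ofUnitHom (φ.comp (QuotientGroup.mk' G))) ↑x * χ (↑a + ↑x)‖ := by
          congr 1
          exact Finset.sum_congr rfl fun x _ => by rw [hx]
      _ ≤ Real.sqrt p := norm_inner_sum_le χ _ hχ a
  have main : (n : ℝ) * ‖S‖ ≤ (n : ℝ) * Real.sqrt p := by
    calc (n : ℝ) * ‖S‖ = ‖(n : ℂ) * S‖ := by
          rw [norm_mul, Complex.norm_natCast]
      _ = ‖∑ φ : Q →* ℂˣ, ∑ x : (ZMod p)ˣ, ((φ ↑x : ℂˣ) : ℂ) * χ (↑a + ↑x)‖ := by rw [key]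
      _ ≤ ∑ φ : Q →* ℂˣ, ‖∑ x : (ZMod p)ˣ, ((φ ↑x : ℂˣ) : ℂ) * χ (↑a + ↑x)‖ :=
          norm_sum_le _ _
      _ ≤ ∑ _φ : Q →* ℂˣ, Real.sqrt p := Finset.sum_le_sum fun φ _ => hT φ
      _ = (n : ℝ) * Real.sqrt p := by
          rw [Finset.sum_const, Finset.card_univ, hcard, nsmul_eq_mul]
  exact le_of_mul_le_mul_left main (by exact_mod_cast hn0)
end

section
/- Let p be a prime, χ a nonprincipal multiplicative character of F_p, G a multiplicative subgroup of F_p^* of order T, and a ∈ F_p^*. Then |T_χ(a, G)|² ≤ p · E(G) / T, where T_χ(a, G) = Σ_{λ, μ ∈ G} χ(a + λ + μ) and E(G) is the additive energy of G. -/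
/-!
Write `S = T_χ(a, G)`. Multiplying `λ, μ` by `g ∈ G` permutes `G × G`, so
`S = ∑_{λ,μ} χ(a + g(λ + μ))` for every `g ∈ G`; summing over `g` gives
`T S = ∑_x r(x) f(x)` with `r(x) = #{(λ, μ) : λ + μ = x}` and `f(x) = ∑_g χ(a + g x)`.
Cauchy–Schwarz bounds `T² |S|²` by `(∑_x r(x)²)(∑_x |f(x)|²) = E(G) ∑_x |f(x)|²`, and
expanding the square, the Jacobi sum `J(χ, χ⁻¹) = -χ(-1)` yields
`∑_x |f(x)|² = p T - |∑_g χ(g)|² ≤ p T`.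
-/

open scoped Classical
open scoped Finset

theorem MulChar.sum_apply_add_mul_inv_apply_add {F R : Type*} [Field F] [Fintype F]
    [CommRing R] [IsDomain R] {χ : MulChar F R} (hχ : χ ≠ 1) (b c : F) :
    ∑ x, χ (x + b) * χ⁻¹ (x + c) = (if b = c then (Fintype.card F : R) else 0) - 1 := by
  split_ifs with hbc
  · subst hbc
    calc ∑ x, χ (x + b) * χ⁻¹ (x + b) = ∑ y, (χ * χ⁻¹) y :=
          Fintype.sum_equiv (Equiv.addRight b) _ _ fun _ => rfl
      _ = Fintype.card F - 1 := by
          rw [mul_inv_cancel, MulChar.sum_one_eq_card_units, Fintype.card_units,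
            Nat.cast_sub Fintype.card_pos, Nat.cast_one]
  · have hd : b - c ≠ 0 := sub_ne_zero.mpr hbc
    -- substituting `x = (b - c) * y - b` turns the sum into a Jacobi sum
    rw [zero_sub]
    calc ∑ x, χ (x + b) * χ⁻¹ (x + c)
        = ∑ y, χ ((b - c) * y) * χ⁻¹ (-(b - c) * (1 - y)) := by
          refine (Fintype.sum_equiv ((Equiv.mulLeft₀ (b - c) hd).trans (Equiv.subRight b))
            _ _ fun y => ?_).symm
          simp only [Equiv.trans_apply, Equiv.mulLeft₀_apply, Equiv.subRight_apply]
          congr 2 <;> ring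
      _ = χ (b - c) * χ⁻¹ (-(b - c)) * jacobiSum χ χ⁻¹ := by
          rw [jacobiSum, Finset.mul_sum]
          exact Finset.sum_congr rfl fun y _ => by rw [map_mul, map_mul]; ring
      _ = -χ ((b - c) * (-(b - c))⁻¹ * -1) := by
          rw [jacobiSum_nontrivial_inv hχ, MulChar.inv_apply', mul_neg, map_mul, map_mul]
      _ = -1 := by
          rw [show (b - c) * (-(b - c))⁻¹ * -1 = 1 by field_simp, map_one]

theorem MulChar.sum_apply_add_mul_mul_inv_apply_add_mul {F R : Type*} [Field F] [Fintype F]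
    [CommRing R] [IsDomain R] {χ : MulChar F R} (hχ : χ ≠ 1) {a b c : F} (ha : a ≠ 0)
    (hb : b ≠ 0) (hc : c ≠ 0) :
    ∑ x, χ (a + b * x) * χ⁻¹ (a + c * x)
      = χ b * χ⁻¹ c * ((if b = c then (Fintype.card F : R) else 0) - 1) := by
  have hfactor : ∀ d : F, d ≠ 0 → ∀ x, a + d * x = d * (x + a * d⁻¹) := fun d hd x => by
    field_simp; ring
  have hcancel : a * b⁻¹ = a * c⁻¹ ↔ b = c := by
    rw [mul_right_inj' ha, inv_inj]
  simp_rw [hfactor b hb, hfactor c hc, map_mul, mul_mul_mul_comm _ (χ _), ← Finset.mul_sum,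
    MulChar.sum_apply_add_mul_inv_apply_add hχ, hcancel]

theorem MulChar.sum_norm_sq_sum_apply_add_mul {F : Type*} [Field F] [Fintype F]
    {χ : MulChar F ℂ} (hχ : χ ≠ 1) {ι : Type*} [Fintype ι] {v : ι → F}
    (hv : Function.Injective v) (hv0 : ∀ i, v i ≠ 0) {a : F} (ha : a ≠ 0) :
    ∑ x, ‖∑ i, χ (a + v i * x)‖ ^ 2
      = Fintype.card F * Fintype.card ι - ‖∑ i, χ (v i)‖ ^ 2 := by
  apply Complex.ofReal_injective
  push_cast
  simp_rw [← Complex.mul_conj', map_sum, starRingEnd_apply, MulChar.star_apply',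
    Finset.sum_mul_sum]
  rw [Finset.sum_comm]
  simp_rw [Finset.sum_comm (s := Finset.univ (α := F)),
    MulChar.sum_apply_add_mul_mul_inv_apply_add_mul hχ ha (hv0 _) (hv0 _), hv.eq_iff, mul_sub,
    mul_one, Finset.sum_sub_distrib, mul_ite, mul_zero, Finset.sum_ite_eq, Finset.mem_univ,
    if_true]
  have hunit : ∀ i, χ (v i) * χ⁻¹ (v i) = 1 := fun i => by
    rw [MulChar.inv_apply', ← map_mul, mul_inv_cancel₀ (hv0 i), map_one]
  simp only [hunit, Finset.sum_const, Finset.card_univ, nsmul_eq_mul, mul_one, mul_comm]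

theorem norm_sum_mul_sq_le {ι R : Type*} [SeminormedRing R] (s : Finset ι) (f g : ι → R) :
    ‖∑ i ∈ s, f i * g i‖ ^ 2 ≤ (∑ i ∈ s, ‖f i‖ ^ 2) * ∑ i ∈ s, ‖g i‖ ^ 2 :=
  calc ‖∑ i ∈ s, f i * g i‖ ^ 2 ≤ (∑ i ∈ s, ‖f i‖ * ‖g i‖) ^ 2 :=
        pow_le_pow_left₀ (norm_nonneg _)
          ((norm_sum_le _ _).trans (Finset.sum_le_sum fun _ _ => norm_mul_le _ _)) 2
    _ ≤ (∑ i ∈ s, ‖f i‖ ^ 2) * ∑ i ∈ s, ‖g i‖ ^ 2 := Finset.sum_mul_sq_le_sq_mul_sq _ _ _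

theorem Fintype.sum_comp_eq_sum_card_fiber_nsmul {α β M : Type*} [Fintype α] [Fintype β]
    [DecidableEq β] [AddCommMonoid M] (s : α → β) (f : β → M) :
    ∑ u, f (s u) = ∑ y, #{u | s u = y} • f y := by
  rw [← Finset.sum_fiberwise Finset.univ s]
  refine Finset.sum_congr rfl fun y _ => ?_
  rw [← Finset.sum_const]
  exact Finset.sum_congr rfl fun u hu => by rw [(Finset.mem_filter.mp hu).2]

theorem Fintype.card_filter_apply_fst_eq_apply_snd_eq_sum_sq {α β : Type*} [Fintype α]
    [Fintype β] [DecidableEq β] (s : α → β) :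
    #{q : α × α | s q.1 = s q.2} = ∑ y, #{u | s u = y} ^ 2 := by
  rw [Finset.card_eq_sum_card_fiberwise (f := fun q => s q.1) (t := Finset.univ)
    fun _ _ => Finset.mem_univ _]
  refine Finset.sum_congr rfl fun y _ => ?_
  rw [sq, ← Finset.card_product, Finset.filter_filter]
  congr 1
  ext q
  simp only [Finset.mem_filter, Finset.mem_univ, Finset.mem_product, true_and]
  constructor
  · rintro ⟨h, rfl⟩; exact ⟨rfl, h.symm⟩
  · rintro ⟨h₁, h₂⟩; exact ⟨h₁.trans h₂.symm, h₁⟩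

theorem Subgroup.sum_sum_apply_mul_add {R M : Type*} [Semiring R] [AddCommMonoid M]
    (G : Subgroup Rˣ) [Fintype G] (φ : R → M) (g : G) :
    ∑ l : G, ∑ m : G, φ (((g : Rˣ) : R) * (((l : Rˣ) : R) + ((m : Rˣ) : R)))
      = ∑ l : G, ∑ m : G, φ (((l : Rˣ) : R) + ((m : Rˣ) : R)) :=
  Fintype.sum_equiv (Equiv.mulLeft g) _ _ fun l =>
    Fintype.sum_equiv (Equiv.mulLeft g) _ _ fun m => by
      simp only [Equiv.coe_mulLeft, Subgroup.coe_mul, Units.val_mul, mul_add]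

/-- For a nonprincipal multiplicative character `χ` of `𝔽_p`, a multiplicative
subgroup `G ⊆ 𝔽_p^*` of order `T`, and `a ∈ 𝔽_p^*`, one has
`|T_χ(a, G)|² ≤ p · E(G) / T`, where `T_χ(a, G) = ∑_{λ,μ ∈ G} χ(a + λ + μ)` and
`E(G)` is the additive energy of `G`. -/
theorem stmt_17 (p : ℕ) [Fact p.Prime] (χ : MulChar (ZMod p) ℂ) (hχ : χ ≠ 1)
    (T : ℕ) (G : Subgroup (ZMod p)ˣ) (hT : Nat.card G = T) (a : (ZMod p)ˣ) :
    ‖∑ l : G, ∑ m : G,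
        χ ((a : ZMod p) + ((l : (ZMod p)ˣ) : ZMod p) + ((m : (ZMod p)ˣ) : ZMod p))‖ ^ 2
      ≤ (p : ℝ) *
          (((Finset.univ : Finset ((G × G) × (G × G))).filter (fun q =>
              ((q.1.1 : (ZMod p)ˣ) : ZMod p) + ((q.1.2 : (ZMod p)ˣ) : ZMod p)
                = ((q.2.1 : (ZMod p)ˣ) : ZMod p) + ((q.2.2 : (ZMod p)ˣ) : ZMod p))).card : ℝ)
        / T := by
  set S := ∑ l : G, ∑ m : G,
    χ ((a : ZMod p) + ((l : (ZMod p)ˣ) : ZMod p) + ((m : (ZMod p)ˣ) : ZMod p))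
  let v : G → ZMod p := fun g => ((g : (ZMod p)ˣ) : ZMod p)
  let s : G × G → ZMod p := fun q => v q.1 + v q.2
  let r : ZMod p → ℕ := fun x => #{q | s q = x}
  let f : ZMod p → ℂ := fun x => ∑ g : G, χ (a + v g * x)
  let E : ℕ := #{q : (G × G) × (G × G) | s q.1 = s q.2}
  have hcard : Fintype.card G = T := Nat.card_eq_fintype_card (α := G) ▸ hT
  have hTpos : (0 : ℝ) < T := by rw [← hcard]; exact_mod_cast Fintype.card_pos
  have hrep : (T : ℂ) * S = ∑ x, (r x : ℂ) * f x :=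
    calc (T : ℂ) * S = ∑ g : G, ∑ l : G, ∑ m : G, χ (a + v g * (v l + v m)) := by
          rw [← hcard, ← Finset.card_univ, ← nsmul_eq_mul, ← Finset.sum_const]
          refine Finset.sum_congr rfl fun g _ => ?_
          refine Eq.trans ?_ (G.sum_sum_apply_mul_add (fun x => χ (a + x)) g).symm
          exact Finset.sum_congr rfl fun l _ => Finset.sum_congr rfl fun m _ => by rw [add_assoc]
      _ = ∑ q : G × G, f (s q) := by
          rw [Fintype.sum_prod_type, Finset.sum_comm]
          exact Finset.sum_congr rfl fun l _ => Finset.sum_comm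
      _ = ∑ x, (r x : ℂ) * f x := by
          simp_rw [Fintype.sum_comp_eq_sum_card_fiber_nsmul s f, nsmul_eq_mul]
          rfl
  have henergy : ∑ x, ‖(r x : ℂ)‖ ^ 2 = E := by
    have hE : E = ∑ x, r x ^ 2 := Fintype.card_filter_apply_fst_eq_apply_snd_eq_sum_sq s
    rw [hE]
    push_cast [Complex.norm_natCast]
    rfl
  have hmoment : ∑ x, ‖f x‖ ^ 2 ≤ p * T := by
    refine (MulChar.sum_norm_sq_sum_apply_add_mul hχ
      (Units.val_injective.comp Subtype.val_injective) (fun g => Units.ne_zero _)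
      a.ne_zero).trans_le ?_
    rw [ZMod.card, hcard]
    exact sub_le_self _ (sq_nonneg _)
  have hcs : (T * ‖S‖) ^ 2 ≤ E * (p * T) :=
    calc (T * ‖S‖) ^ 2 = ‖∑ x, (r x : ℂ) * f x‖ ^ 2 := by
          rw [← hrep, norm_mul, Complex.norm_natCast]
      _ ≤ (∑ x, ‖(r x : ℂ)‖ ^ 2) * ∑ x, ‖f x‖ ^ 2 := norm_sum_mul_sq_le _ _ _
      _ ≤ E * (p * T) := by rw [henergy]; gcongr
  rw [le_div_iff₀ hTpos]
  nlinarith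
end

section
/- Let p be a prime, χ a nonprincipal multiplicative character of F_p, I = {1, …, H} an interval with H < p, G a multiplicative subgroup of F_p^* of order T, and a ∈ F_p^*. Then |S_χ(a, I, G)|² ≤ p · N(I, G), where S_χ(a, I, G) = Σ_{x ∈ I} Σ_{λ ∈ G} χ(x + aλ) and N(I, G) = #{(x, y, λ) ∈ I × I × G : λ x ≡ y (mod p)}. -/
/-!
Write `V v = ∑_{λ ∈ G} χ(v + aλ)`. Since `χ(μ) V(x/μ) = ∑_λ χ(x + aλμ) = ∑_λ χ(x + aλ)`,
averaging over `μ ∈ G` gives `|G| S = ∑_{(x, μ) ∈ I × G} χ(μ) V(x/μ)`. Cauchy–Schwarz over the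
fibres of `(x, μ) ↦ x/μ` bounds `|G|² |S|²` by the number of pairs with `x/μ = y/ν`, which is
`|G| N`, times `∑_v |V v|²`. Expanding the latter, each diagonal term is at most `p`, and each
off-diagonal correlation `∑_v χ(v + c) conj (χ(v + d))` is the Jacobi sum `J(χ⁻¹, χ)` up to the
factor `χ⁻¹(-1)`, hence equals `-1`; so `∑_v |V v|² ≤ |G| p`.
-/

open scoped ComplexConjugate

open Finset Function

namespace MulChar

lemma norm_apply_le_one {R : Type*} [CommMonoid R] [Finite Rˣ] (χ : MulChar R ℂ) (x : R) :
    ‖χ x‖ ≤ 1 := by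
  cases nonempty_fintype Rˣ
  by_cases hx : IsUnit x
  · refine (pow_eq_one_iff_of_nonneg (norm_nonneg _) (Nat.card_pos (α := Rˣ)).ne').mp ?_ |>.le
    rw [← hx.unit_spec, ← norm_pow, ← map_pow, ← Units.val_pow_eq_pow_val, pow_card_eq_one',
      Units.val_one, map_one, norm_one]
  · simp [χ.map_nonunit hx]

variable {F : Type*} [Field F] [Fintype F]

lemma sum_apply_add_mul_inv_apply {χ : MulChar F ℂ} (hχ : χ ≠ 1) {e : F} (he : e ≠ 0) :
    ∑ w, χ (w + e) * χ⁻¹ w = -1 := by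
  have hχ' : χ⁻¹ ≠ 1 := inv_ne_one.mpr hχ
  have hunit : χ⁻¹ e * χ e = 1 := by
    rw [← mul_apply, inv_mul, one_apply (isUnit_iff_ne_zero.mpr he)]
  -- substituting `w = -e x` turns the sum into `χ⁻¹ (-1) * jacobiSum χ⁻¹ χ`
  have hsub (x : F) : χ (-e * x + e) * χ⁻¹ (-e * x) = χ⁻¹ (-1) * (χ⁻¹ x * χ (1 - x)) := by
    rw [show -e * x + e = e * (1 - x) by ring, show -e * x = -1 * e * x by ring]
    simp only [map_mul]
    linear_combination (χ⁻¹ (-1) * χ⁻¹ x * χ (1 - x)) * hunit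
  rw [← Equiv.sum_comp (Equiv.mulLeft₀ (-e) (neg_ne_zero.mpr he))]
  simp only [Equiv.mulLeft₀_apply, hsub, ← mul_sum]
  have hJ := jacobiSum_nontrivial_inv hχ'
  rw [inv_inv] at hJ
  rw [← jacobiSum, hJ, mul_neg, ← map_mul, neg_one_mul, neg_neg, map_one]

lemma re_sum_apply_add_mul_conj_le [DecidableEq F] {χ : MulChar F ℂ} (hχ : χ ≠ 1) (c d : F) :
    (∑ v, χ (v + c) * conj (χ (v + d))).re ≤ if c = d then (Fintype.card F : ℝ) else 0 := by
  split_ifs with hcd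
  · subst hcd
    simp_rw [Complex.mul_conj', Complex.re_sum]
    norm_cast
    calc ∑ v, ‖χ (v + c)‖ ^ 2 ≤ ∑ _v : F, (1 : ℝ) :=
          sum_le_sum fun v _ => pow_le_one₀ (norm_nonneg _) (χ.norm_apply_le_one _)
      _ = Fintype.card F := by simp
  · have hshift : ∑ v, χ (v + c) * conj (χ (v + d)) = ∑ w, χ (w + (c - d)) * χ⁻¹ w := by
      refine Fintype.sum_equiv (Equiv.addRight d) _ _ fun v => ?_
      rw [Equiv.coe_addRight, add_assoc, add_sub_cancel, ← star_apply']
      rfl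
    rw [hshift, sum_apply_add_mul_inv_apply hχ (sub_ne_zero.mpr hcd)]
    simp

lemma sum_norm_sq_sum_apply_add_le [DecidableEq F] {χ : MulChar F ℂ} (hχ : χ ≠ 1) {ι : Type*}
    [Fintype ι] {f : ι → F} (hf : Injective f) :
    ∑ v, ‖∑ i, χ (v + f i)‖ ^ 2 ≤ Fintype.card ι * Fintype.card F := by
  have hexpand : ((∑ v, ‖∑ i, χ (v + f i)‖ ^ 2 : ℝ) : ℂ)
      = ∑ i, ∑ j, ∑ v, χ (v + f i) * conj (χ (v + f j)) := by
    push_cast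
    simp_rw [← Complex.mul_conj', map_sum, sum_mul_sum]
    rw [sum_comm]
    exact sum_congr rfl fun i _ => sum_comm
  calc ∑ v, ‖∑ i, χ (v + f i)‖ ^ 2
      = ∑ i, ∑ j, (∑ v, χ (v + f i) * conj (χ (v + f j))).re := by
        rw [← Complex.ofReal_re (∑ v, _), hexpand]
        simp only [Complex.re_sum]
    _ ≤ ∑ i, ∑ j, if f i = f j then (Fintype.card F : ℝ) else 0 :=
        sum_le_sum fun i _ => sum_le_sum fun j _ => re_sum_apply_add_mul_conj_le hχ _ _
    _ = Fintype.card ι * Fintype.card F := by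
        classical
        simp [hf.eq_iff]

end MulChar

lemma sum_card_fiberwise_sq {ι β : Type*} [Fintype β] [DecidableEq β] (s : Finset ι) (φ : ι → β) :
    ∑ b, #{i ∈ s | φ i = b} ^ 2 = #{q ∈ s ×ˢ s | φ q.1 = φ q.2} := by
  rw [card_eq_sum_card_fiberwise (f := fun q => φ q.1) (t := univ) fun _ _ => mem_univ _]
  refine sum_congr rfl fun b _ => ?_
  rw [filter_filter, sq, ← card_product, ← filter_product]
  congr 1
  refine filter_congr fun q _ => ?_
  exact ⟨fun ⟨h1, h2⟩ => ⟨h1.trans h2.symm, h1⟩, fun ⟨h, hb⟩ => ⟨hb, h.symm.trans hb⟩⟩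

lemma norm_sum_mul_comp_sq_le {ι β : Type*} [Fintype β] [DecidableEq β] (s : Finset ι)
    {g : ι → ℂ} (hg : ∀ i ∈ s, ‖g i‖ ≤ 1) (φ : ι → β) (V : β → ℂ) :
    ‖∑ i ∈ s, g i * V (φ i)‖ ^ 2 ≤ #{q ∈ s ×ˢ s | φ q.1 = φ q.2} * ∑ b, ‖V b‖ ^ 2 := by
  have hfiber : ∑ i ∈ s, ‖V (φ i)‖ = ∑ b, (#{i ∈ s | φ i = b} : ℝ) * ‖V b‖ := by
    rw [← sum_fiberwise s φ]
    refine sum_congr rfl fun b _ => ?_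
    rw [sum_congr rfl fun i hi => by rw [(mem_filter.mp hi).2], sum_const, nsmul_eq_mul]
  calc ‖∑ i ∈ s, g i * V (φ i)‖ ^ 2
      ≤ (∑ b, (#{i ∈ s | φ i = b} : ℝ) * ‖V b‖) ^ 2 := by
        rw [← hfiber]
        gcongr
        refine (norm_sum_le _ _).trans (sum_le_sum fun i hi => ?_)
        rw [norm_mul]
        exact mul_le_of_le_one_left (norm_nonneg _) (hg i hi)
    _ ≤ (∑ b, (#{i ∈ s | φ i = b} : ℝ) ^ 2) * ∑ b, ‖V b‖ ^ 2 := sum_mul_sq_le_sq_mul_sq _ _ _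
    _ = #{q ∈ s ×ˢ s | φ q.1 = φ q.2} * ∑ b, ‖V b‖ ^ 2 := by
        rw [← sum_card_fiberwise_sq]; push_cast; rfl

section Subgroup

variable {F : Type*} [Field F] (G : Subgroup Fˣ) [Fintype G]
  {ι : Type*} (I : Finset ι) (e : ι → F)

lemma card_mul_sum_sum_mulChar_eq (χ : MulChar F ℂ) (a : F) :
    (Fintype.card G : ℂ) * ∑ x ∈ I, ∑ l : G, χ (e x + a * ((l : Fˣ) : F))
      = ∑ q ∈ I ×ˢ (univ : Finset G),
          χ ((q.2 : Fˣ) : F) * ∑ l : G, χ (e q.1 / ((q.2 : Fˣ) : F) + a * ((l : Fˣ) : F)) := by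
  have hterm (x : ι) (μ : G) :
      χ ((μ : Fˣ) : F) * ∑ l : G, χ (e x / ((μ : Fˣ) : F) + a * ((l : Fˣ) : F))
        = ∑ l : G, χ (e x + a * ((l : Fˣ) : F)) := by
    rw [mul_sum]
    refine Fintype.sum_equiv (Equiv.mulRight μ) _ _ fun l => ?_
    rw [← map_mul, Equiv.coe_mulRight, Subgroup.coe_mul, Units.val_mul]
    congr 1
    field_simp
  rw [sum_product, mul_sum]
  refine sum_congr rfl fun x _ => ?_
  simp only [hterm, sum_const, card_univ, nsmul_eq_mul]

lemma card_filter_div_eq_div [DecidableEq F] :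
    #{q ∈ (I ×ˢ (univ : Finset G)) ×ˢ (I ×ˢ (univ : Finset G)) |
        e q.1.1 / ((q.1.2 : Fˣ) : F) = e q.2.1 / ((q.2.2 : Fˣ) : F)}
      = Fintype.card G *
          #{q ∈ (I ×ˢ I) ×ˢ (univ : Finset G) | ((q.2 : Fˣ) : F) * e q.1.1 = e q.1.2} := by
  rw [mul_comm, ← card_univ (α := G), ← card_product]
  refine card_nbij' (fun q => (((q.1.1, q.2.1), (q.2.2 / q.1.2 : G)), q.1.2))
    (fun q => ((q.1.1.1, q.2), (q.1.1.2, q.1.2 * q.2))) ?_ ?_ ?_ ?_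
  · rintro ⟨⟨x, μ⟩, ⟨y, ν⟩⟩ hq
    simp only [coe_filter, mem_coe, mem_filter, mem_product, mem_univ, and_true] at hq ⊢
    refine ⟨hq.1, ?_⟩
    simp only [Subgroup.coe_div, Units.val_div_eq_div_val]
    have := hq.2
    field_simp at this ⊢
    linear_combination this
  · rintro ⟨⟨⟨x, y⟩, l⟩, μ⟩ hq
    simp only [coe_filter, mem_coe, mem_filter, mem_product, mem_univ, and_true] at hq ⊢
    refine ⟨hq.1, ?_⟩
    simp only [Subgroup.coe_mul, Units.val_mul, ← hq.2]
    field_simp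
  · rintro ⟨⟨x, μ⟩, ⟨y, ν⟩⟩ -
    simp
  · rintro ⟨⟨⟨x, y⟩, l⟩, μ⟩ -
    simp

theorem norm_sq_sum_sum_mulChar_le [Fintype F] [DecidableEq F] {χ : MulChar F ℂ} (hχ : χ ≠ 1)
    (a : Fˣ) :
    ‖∑ x ∈ I, ∑ l : G, χ (e x + a * ((l : Fˣ) : F))‖ ^ 2
      ≤ Fintype.card F *
          #{q ∈ (I ×ˢ I) ×ˢ (univ : Finset G) | ((q.2 : Fˣ) : F) * e q.1.1 = e q.1.2} := by
  set S := ∑ x ∈ I, ∑ l : G, χ (e x + a * ((l : Fˣ) : F))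
  set N := #{q ∈ (I ×ˢ I) ×ˢ (univ : Finset G) | ((q.2 : Fˣ) : F) * e q.1.1 = e q.1.2}
  set V : F → ℂ := fun v => ∑ l : G, χ (v + a * ((l : Fˣ) : F))
  have hV : ∑ v, ‖V v‖ ^ 2 ≤ Fintype.card G * Fintype.card F :=
    MulChar.sum_norm_sq_sum_apply_add_le hχ (f := fun l : G => a * ((l : Fˣ) : F))
      fun l₁ l₂ h => Subtype.ext (Units.ext (mul_left_cancel₀ a.ne_zero h))
  have hCS := norm_sum_mul_comp_sq_le (I ×ˢ (univ : Finset G)) (g := fun q => χ ((q.2 : Fˣ) : F))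
    (fun q _ => χ.norm_apply_le_one _) (fun q => e q.1 / ((q.2 : Fˣ) : F)) V
  rw [← card_mul_sum_sum_mulChar_eq, card_filter_div_eq_div, norm_mul, Complex.norm_natCast]
    at hCS
  have hG : (0 : ℝ) < Fintype.card G := Nat.cast_pos.mpr Fintype.card_pos
  refine le_of_mul_le_mul_left ?_ (pow_pos hG 2)
  calc (Fintype.card G : ℝ) ^ 2 * ‖S‖ ^ 2 = (Fintype.card G * ‖S‖) ^ 2 := by ring
    _ ≤ (Fintype.card G * N : ℕ) * ∑ v, ‖V v‖ ^ 2 := hCS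
    _ ≤ (Fintype.card G * N : ℕ) * (Fintype.card G * Fintype.card F) := by gcongr
    _ = (Fintype.card G : ℝ) ^ 2 * (Fintype.card F * N) := by push_cast; ring

end Subgroup

open scoped Classical

theorem stmt_18_general (p : ℕ) [Fact p.Prime] (χ : MulChar (ZMod p) ℂ) (hχ : χ ≠ 1)
    (H : ℕ) (G : Subgroup (ZMod p)ˣ)
    (a : (ZMod p)ˣ) :
    ‖∑ x ∈ Finset.Icc 1 H, ∑ l : G,
        χ ((x : ZMod p) + (a : ZMod p) * ((l : (ZMod p)ˣ) : ZMod p))‖ ^ 2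
      ≤ (p : ℝ) *
          ((((Finset.Icc 1 H ×ˢ Finset.Icc 1 H) ×ˢ (Finset.univ : Finset G)).filter
            (fun q => ((q.2 : (ZMod p)ˣ) : ZMod p) * (q.1.1 : ZMod p)
              = (q.1.2 : ZMod p))).card : ℝ) := by
  simpa only [ZMod.card] using
    norm_sq_sum_sum_mulChar_le G (Icc 1 H) (fun x : ℕ => (x : ZMod p)) hχ a

/-- For a nonprincipal multiplicative character `χ` of `𝔽_p`, the interval
`I = {1, ..., H}` with `H < p`, a multiplicative subgroup `G ⊆ 𝔽_p^*` of order `T`,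
and `a ∈ 𝔽_p^*`, one has `|S_χ(a, I, G)|² ≤ p · N(I, G)`, where
`S_χ(a, I, G) = ∑_{x ∈ I} ∑_{λ ∈ G} χ(x + aλ)` and
`N(I, G) = #{(x, y, λ) ∈ I × I × G : λ x ≡ y (mod p)}`. -/
theorem stmt_18 (p : ℕ) [Fact p.Prime] (χ : MulChar (ZMod p) ℂ) (hχ : χ ≠ 1)
    (H : ℕ) (hH : H < p) (T : ℕ) (G : Subgroup (ZMod p)ˣ) (hT : Nat.card G = T)
    (a : (ZMod p)ˣ) :
    ‖∑ x ∈ Finset.Icc 1 H, ∑ l : G,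
        χ ((x : ZMod p) + (a : ZMod p) * ((l : (ZMod p)ˣ) : ZMod p))‖ ^ 2
      ≤ (p : ℝ) *
          ((((Finset.Icc 1 H ×ˢ Finset.Icc 1 H) ×ˢ (Finset.univ : Finset G)).filter
            (fun q => ((q.2 : (ZMod p)ˣ) : ZMod p) * (q.1.1 : ZMod p)
              = (q.1.2 : ZMod p))).card : ℝ) :=
  stmt_18_general p χ hχ H G a
end
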